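/- Let β > 0, 0 ≤ α < 2√β, f(x) = βx²/2 on ℝ, and let X : ℝ → ℝ be a twice continuously differentiable solution of Ẍ(t) + αẊ(t) + βX(t) = 0. Letت t₁ < t₂ with t₂ − t₁ > 2π/√(4β − α²), and set J_α[Y] = ∫_{t₁}^{t₂} e^{αt}( (1/2)Ẏ(t)² − βY(t)²/2 ) dt. Then X is a saddle point of J_α: for every δ > 0 there exist continuously differentiable functions h₊, h₋ : [t₁,t₂] → ℝ with h₊(t₁) = h₊(t₂) = h₋(t₁) = h₋(t₂) = 0, each with C¹ norm max|h| + max|ḣ| less than δ, such that J_α[X + h₊] > J_α[X] and J_α[X + h₋] < J_α[X]. -/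

import Mathlib

/-!
Along a solution `X` of `Ẍ + αẊ + βX = 0` the first variation of `J_α` vanishes, so
`J_α[X + h] = J_α[X] + J_α[h]` exactly, the action being quadratic. For
`h = ε e^{-αt/2} sin(ω(t - t₁))` with `ω (t₂ - t₁) ∈ πℤ` the weight `e^{αt}` cancels and
`J_α[h] = ε² (t₂ - t₁)/4 · (ω² - (β - α²/4))`. The gap condition says exactly that the lowest
admissible frequency `π/(t₂ - t₁)` lies below `√(β - α²/4)`, which gives a direction of descent,
while high frequencies give directions of ascent; `ε` is then chosen to make the `C¹` norm small.
-/

open Set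

/-- The action functional with constant damping `α` on `[t₁, t₂]` for the scalar quadratic
loss `f(x) = βx²/2`, evaluated on a curve `Y` with derivative `Y'`. -/
noncomputable def constDampAction1D (β α t₁ t₂ : ℝ) (Y Y' : ℝ → ℝ) : ℝ :=
  ∫ t in t₁..t₂, Real.exp (α * t) * ((1 / 2) * (Y' t) ^ 2 - β * (Y t) ^ 2 / 2)

open Real intervalIntegral

noncomputable def c1Norm (s : Set ℝ) (h h' : ℝ → ℝ) : ℝ :=
  (⨆ t ∈ s, |h t|) + (⨆ t ∈ s, |h' t|)

def IsAdmissiblePerturbation (t₁ t₂ : ℝ) (h h' : ℝ → ℝ) : Prop :=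
  (∀ t ∈ Icc t₁ t₂, HasDerivWithinAt h (h' t) (Icc t₁ t₂) t) ∧
    ContinuousOn h' (Icc t₁ t₂) ∧ h t₁ = 0 ∧ h t₂ = 0

theorem IsCompact.exists_pos_c1Norm_smul_lt {s : Set ℝ} (hs : IsCompact s) {h h' : ℝ → ℝ}
    (hc : ContinuousOn h s) (hc' : ContinuousOn h' s) {δ : ℝ} (hδ : 0 < δ) :
    ∃ ε : ℝ, 0 < ε ∧ c1Norm s (ε • h) (ε • h') < δ := by
  obtain ⟨C, hC⟩ := hs.exists_bound_of_continuousOn hc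
  obtain ⟨C', hC'⟩ := hs.exists_bound_of_continuousOn hc'
  set M := |C| + |C'| + 1
  have hM : 0 < M := by positivity
  have iSup_le_of_bound {f : ℝ → ℝ} {B : ℝ} (hf : ∀ t ∈ s, ‖f t‖ ≤ B) :
      (⨆ t ∈ s, |((δ / (2 * M)) • f) t|) ≤ δ / (2 * M) * |B| := by
    refine Real.iSup_le (fun t => Real.iSup_le (fun ht => ?_) (by positivity)) (by positivity)
    rw [Pi.smul_apply, smul_eq_mul, abs_mul, abs_of_pos (by positivity)]
    exact mul_le_mul_of_nonneg_left ((hf t ht).trans (le_abs_self B)) (by positivity)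
  refine ⟨δ / (2 * M), by positivity, ?_⟩
  have hsum : δ / (2 * M) * |C| + δ / (2 * M) * |C'| < δ := by
    rw [← mul_add, div_mul_eq_mul_div, div_lt_iff₀ (by positivity)]
    nlinarith
  exact (add_le_add (iSup_le_of_bound hC) (iSup_le_of_bound hC')).trans_lt hsum

section Action

variable {β α t₁ t₂ : ℝ}

theorem constDampAction1D_smul (c : ℝ) (Y Y' : ℝ → ℝ) :
    constDampAction1D β α t₁ t₂ (c • Y) (c • Y') = c ^ 2 * constDampAction1D β α t₁ t₂ Y Y' := by
  rw [constDampAction1D, constDampAction1D, ← integral_const_mul]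
  congr 1
  funext t
  simp only [Pi.smul_apply, smul_eq_mul]
  ring

variable {X X' X'' h h' : ℝ → ℝ}

theorem integral_exp_mul_firstVariation_eq_zero (hX : ∀ t, HasDerivAt X (X' t) t)
    (hX' : ∀ t, HasDerivAt X' (X'' t) t) (hODE : ∀ t, X'' t + α * X' t + β * X t = 0)
    (hh : ∀ t, HasDerivAt h (h' t) t) (hh' : Continuous h') (h₁ : h t₁ = 0) (h₂ : h t₂ = 0) :
    ∫ t in t₁..t₂, exp (α * t) * (X' t * h' t - β * (X t * h t)) = 0 := by
  have cX : Continuous X := continuous_iff_continuousAt.2 fun t => (hX t).continuousAt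
  have cX' : Continuous X' := continuous_iff_continuousAt.2 fun t => (hX' t).continuousAt
  have ch : Continuous h := continuous_iff_continuousAt.2 fun t => (hh t).continuousAt
  -- the Euler–Lagrange equation `(e^{αt} Ẋ)˙ = -β e^{αt} X` makes the integrand exact
  have hexact : ∀ t ∈ uIcc t₁ t₂, HasDerivAt (fun t => exp (α * t) * (X' t * h t))
      (exp (α * t) * (X' t * h' t - β * (X t * h t))) t := by
    intro t _
    refine (((hasDerivAt_id t).const_mul α).exp.mul ((hX' t).mul (hh t))).congr_deriv ?_
    simp only [id, Pi.mul_apply]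
    linear_combination exp (α * t) * h t * hODE t
  rw [integral_eq_sub_of_hasDerivAt hexact ((by fun_prop : Continuous _).intervalIntegrable _ _),
    h₁, h₂]
  ring

theorem constDampAction1D_add_of_ode (hX : ∀ t, HasDerivAt X (X' t) t)
    (hX' : ∀ t, HasDerivAt X' (X'' t) t) (hODE : ∀ t, X'' t + α * X' t + β * X t = 0)
    (hh : ∀ t, HasDerivAt h (h' t) t) (hh' : Continuous h') (h₁ : h t₁ = 0) (h₂ : h t₂ = 0) :
    constDampAction1D β α t₁ t₂ (X + h) (X' + h') =
      constDampAction1D β α t₁ t₂ X X' + constDampAction1D β α t₁ t₂ h h' := by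
  have cX : Continuous X := continuous_iff_continuousAt.2 fun t => (hX t).continuousAt
  have cX' : Continuous X' := continuous_iff_continuousAt.2 fun t => (hX' t).continuousAt
  have ch : Continuous h := continuous_iff_continuousAt.2 fun t => (hh t).continuousAt
  have hcross := integral_exp_mul_firstVariation_eq_zero hX hX' hODE hh hh' h₁ h₂
  have hsplit : (fun t => exp (α * t) * ((1 / 2) * ((X' + h') t) ^ 2 - β * ((X + h) t) ^ 2 / 2))
      = fun t => exp (α * t) * ((1 / 2) * (X' t) ^ 2 - β * (X t) ^ 2 / 2)
        + (exp (α * t) * (X' t * h' t - β * (X t * h t))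
          + exp (α * t) * ((1 / 2) * (h' t) ^ 2 - β * (h t) ^ 2 / 2)) := by
    funext t
    simp only [Pi.add_apply]
    ring
  have hint {f : ℝ → ℝ} (hf : Continuous f) : IntervalIntegrable f MeasureTheory.volume t₁ t₂ :=
    hf.intervalIntegrable _ _
  unfold constDampAction1D
  rw [hsplit, integral_add (hint (by fun_prop)) (hint (by fun_prop)),
    integral_add (hint (by fun_prop)) (hint (by fun_prop)), hcross, zero_add]

end Action

section DampedSine

variable (α t₁ ω : ℝ)

noncomputable def dampedSine (t : ℝ) : ℝ :=
  exp (-(α / 2) * t) * sin (ω * (t - t₁))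

noncomputable def dampedSineDeriv (t : ℝ) : ℝ :=
  exp (-(α / 2) * t) * (ω * cos (ω * (t - t₁)) - α / 2 * sin (ω * (t - t₁)))

theorem hasDerivAt_dampedSine (t : ℝ) :
    HasDerivAt (dampedSine α t₁ ω) (dampedSineDeriv α t₁ ω t) t := by
  refine ((((hasDerivAt_id t).const_mul (-(α / 2))).exp).mul
    (((hasDerivAt_id t).sub_const t₁).const_mul ω).sin).congr_deriv ?_
  simp only [dampedSineDeriv, id]
  ring

theorem continuous_dampedSine : Continuous (dampedSine α t₁ ω) := by
  unfold dampedSine; fun_prop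

theorem continuous_dampedSineDeriv : Continuous (dampedSineDeriv α t₁ ω) := by
  unfold dampedSineDeriv; fun_prop

theorem dampedSine_left : dampedSine α t₁ ω t₁ = 0 := by
  simp [dampedSine]

variable {α t₁ ω}

theorem dampedSine_eq_zero {t₂ : ℝ} (hsin : sin (ω * (t₂ - t₁)) = 0) :
    dampedSine α t₁ ω t₂ = 0 := by
  simp [dampedSine, hsin]

theorem exp_mul_lagrangian_dampedSine (β t : ℝ) :
    exp (α * t) * ((1 / 2) * (dampedSineDeriv α t₁ ω t) ^ 2 - β * (dampedSine α t₁ ω t) ^ 2 / 2)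
      = (1 / 2) * (ω * cos (ω * (t - t₁)) - α / 2 * sin (ω * (t - t₁))) ^ 2
        - β * sin (ω * (t - t₁)) ^ 2 / 2 := by
  have hexp : exp (α * t) * exp (-(α / 2) * t) ^ 2 = 1 := by
    rw [← exp_nat_mul, ← exp_add]; ring_nf; exact exp_zero
  simp only [dampedSine, dampedSineDeriv, mul_pow]
  linear_combination ((1 / 2) * (ω * cos (ω * (t - t₁)) - α / 2 * sin (ω * (t - t₁))) ^ 2
    - β * sin (ω * (t - t₁)) ^ 2 / 2) * hexp

theorem constDampAction1D_dampedSine (β : ℝ) {t₂ : ℝ} (hω : ω ≠ 0)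
    (hsin : sin (ω * (t₂ - t₁)) = 0) :
    constDampAction1D β α t₁ t₂ (dampedSine α t₁ ω) (dampedSineDeriv α t₁ ω)
      = (t₂ - t₁) / 4 * (ω ^ 2 - (β - α ^ 2 / 4)) := by
  set F : ℝ → ℝ := fun t => (ω ^ 2 + α ^ 2 / 4 - β) / 4 * (t - t₁)
    + (ω ^ 2 - α ^ 2 / 4 + β) / (8 * ω) * sin (2 * (ω * (t - t₁)))
    + α / 8 * cos (2 * (ω * (t - t₁)))
  have hF : ∀ t ∈ uIcc t₁ t₂, HasDerivAt F (exp (α * t) *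
      ((1 / 2) * (dampedSineDeriv α t₁ ω t) ^ 2 - β * (dampedSine α t₁ ω t) ^ 2 / 2)) t := by
    intro t _
    have hu : HasDerivAt (fun t => 2 * (ω * (t - t₁))) (2 * ω) t := by
      simpa using (((hasDerivAt_id t).sub_const t₁).const_mul ω).const_mul 2
    have hlin : HasDerivAt (fun t => t - t₁) 1 t := (hasDerivAt_id t).sub_const t₁
    refine (((hlin.const_mul _).add (hu.sin.const_mul _)).add (hu.cos.const_mul _)).congr_deriv ?_
    have hω8 : (ω ^ 2 - α ^ 2 / 4 + β) / (8 * ω) * (2 * ω) = (ω ^ 2 - α ^ 2 / 4 + β) / 4 := by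
      field_simp
      ring
    rw [exp_mul_lagrangian_dampedSine, cos_two_mul, sin_two_mul]
    linear_combination (2 * cos (ω * (t - t₁)) ^ 2 - 1) * hω8
      + (β / 2 - α ^ 2 / 8) * sin_sq_add_cos_sq (ω * (t - t₁))
  have hsin2 : sin (2 * (ω * (t₂ - t₁))) = 0 := by rw [sin_two_mul, hsin]; ring
  have hcos2 : cos (2 * (ω * (t₂ - t₁))) = 1 := by
    rw [cos_two_mul']
    linear_combination sin_sq_add_cos_sq (ω * (t₂ - t₁)) - 2 * sin (ω * (t₂ - t₁)) * hsin
  have hφ := continuous_dampedSine α t₁ ω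
  have hφ' := continuous_dampedSineDeriv α t₁ ω
  unfold constDampAction1D
  rw [integral_eq_sub_of_hasDerivAt hF ((by fun_prop : Continuous _).intervalIntegrable _ _)]
  simp only [F, hsin2, hcos2, sub_self, mul_zero, sin_zero, cos_zero]
  ring

end DampedSine

theorem exists_isAdmissiblePerturbation_constDampAction1D_add_eq {β α t₁ t₂ ω δ : ℝ}
    {X X' X'' : ℝ → ℝ} (hX : ∀ t, HasDerivAt X (X' t) t) (hX' : ∀ t, HasDerivAt X' (X'' t) t)
    (hODE : ∀ t, X'' t + α * X' t + β * X t = 0) (ht : t₁ < t₂) (hω : ω ≠ 0)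
    (hsin : sin (ω * (t₂ - t₁)) = 0) (hδ : 0 < δ) :
    ∃ h h' : ℝ → ℝ, IsAdmissiblePerturbation t₁ t₂ h h' ∧ c1Norm (Icc t₁ t₂) h h' < δ ∧
      ∃ c > 0, constDampAction1D β α t₁ t₂ (X + h) (X' + h') =
        constDampAction1D β α t₁ t₂ X X' + c * (ω ^ 2 - (β - α ^ 2 / 4)) := by
  have hφ := continuous_dampedSine α t₁ ω
  have hφ' := continuous_dampedSineDeriv α t₁ ω
  obtain ⟨ε, hε, hnorm⟩ :=
    isCompact_Icc.exists_pos_c1Norm_smul_lt hφ.continuousOn hφ'.continuousOn hδ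
  have hderiv : ∀ t, HasDerivAt (ε • dampedSine α t₁ ω) ((ε • dampedSineDeriv α t₁ ω) t) t :=
    fun t => (hasDerivAt_dampedSine α t₁ ω t).const_smul ε
  have h₁ : (ε • dampedSine α t₁ ω) t₁ = 0 := by simp [dampedSine_left]
  have h₂ : (ε • dampedSine α t₁ ω) t₂ = 0 := by simp [dampedSine_eq_zero hsin]
  refine ⟨_, _, ⟨fun t _ => (hderiv t).hasDerivWithinAt, (hφ'.const_smul ε).continuousOn, h₁, h₂⟩,
    hnorm, ε ^ 2 * ((t₂ - t₁) / 4), by have := sub_pos.2 ht; positivity, ?_⟩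
  rw [constDampAction1D_add_of_ode hX hX' hODE hderiv (hφ'.const_smul ε) h₁ h₂,
    constDampAction1D_smul, constDampAction1D_dampedSine β hω hsin]
  ring

theorem underdamped_nesterov_saddle_general
    (β α : ℝ) (hα0 : 0 ≤ α) (hα : α < 2 * Real.sqrt β)
    (X X' X'' : ℝ → ℝ)
    (hX : ∀ t : ℝ, HasDerivAt X (X' t) t)
    (hX' : ∀ t : ℝ, HasDerivAt X' (X'' t) t)
    (hODE : ∀ t : ℝ, X'' t + α * X' t + β * X t = 0)
    (t₁ t₂ : ℝ)
    (hgap : t₂ - t₁ > 2 * Real.pi / Real.sqrt (4 * β - α ^ 2)) :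
    ∀ δ > (0 : ℝ), ∃ hp hp' hm hm' : ℝ → ℝ,
      (∀ t ∈ Icc t₁ t₂, HasDerivWithinAt hp (hp' t) (Icc t₁ t₂) t) ∧
      ContinuousOn hp' (Icc t₁ t₂) ∧ hp t₁ = 0 ∧ hp t₂ = 0 ∧
      (∀ t ∈ Icc t₁ t₂, HasDerivWithinAt hm (hm' t) (Icc t₁ t₂) t) ∧
      ContinuousOn hm' (Icc t₁ t₂) ∧ hm t₁ = 0 ∧ hm t₂ = 0 ∧
      (⨆ t ∈ Icc t₁ t₂, |hp t|) + (⨆ t ∈ Icc t₁ t₂, |hp' t|) < δ ∧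
      (⨆ t ∈ Icc t₁ t₂, |hm t|) + (⨆ t ∈ Icc t₁ t₂, |hm' t|) < δ ∧
      constDampAction1D β α t₁ t₂ (X + hp) (X' + hp') > constDampAction1D β α t₁ t₂ X X' ∧
      constDampAction1D β α t₁ t₂ (X + hm) (X' + hm') < constDampAction1D β α t₁ t₂ X X' := by
  intro δ hδ
  have hdisc : 0 < 4 * β - α ^ 2 := by
    nlinarith [(Real.lt_sqrt (by linarith : 0 ≤ α / 2)).1 (by linarith : α / 2 < √β)]
  set r := √(4 * β - α ^ 2)
  have hr : 0 < r := Real.sqrt_pos.2 hdisc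
  have hr2 : (r / 2) ^ 2 = β - α ^ 2 / 4 := by rw [div_pow, Real.sq_sqrt hdisc.le]; ring
  set L := t₂ - t₁
  have hL : 0 < L := lt_trans (by positivity) hgap
  have hgap' : 2 * π < r * L := by rw [gt_iff_lt, div_lt_iff₀ hr] at hgap; linarith
  obtain ⟨k, hk⟩ := exists_nat_gt (r * L / (2 * π))
  rw [div_lt_iff₀ (by positivity)] at hk
  have hωp₀ : 0 < k * π / L := div_pos (by nlinarith) hL
  have hωm₀ : 0 < π / L := div_pos pi_pos hL
  obtain ⟨hp, hp', ⟨hpd, hpc, hp₁, hp₂⟩, hpn, cp, hcp, hpJ⟩ :=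
    exists_isAdmissiblePerturbation_constDampAction1D_add_eq (ω := k * π / L) hX hX' hODE
      (sub_pos.1 hL) hωp₀.ne' (by rw [div_mul_cancel₀ _ hL.ne', sin_nat_mul_pi]) hδ
  obtain ⟨hm, hm', ⟨hmd, hmc, hm₁, hm₂⟩, hmn, cm, hcm, hmJ⟩ :=
    exists_isAdmissiblePerturbation_constDampAction1D_add_eq (ω := π / L) hX hX' hODE
      (sub_pos.1 hL) hωm₀.ne' (by rw [div_mul_cancel₀ _ hL.ne', sin_pi]) hδ
  have hωp : r / 2 < k * π / L := by rw [lt_div_iff₀ hL]; nlinarith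
  have hωm : π / L < r / 2 := by rw [div_lt_iff₀ hL]; nlinarith
  refine ⟨hp, hp', hm, hm', hpd, hpc, hp₁, hp₂, hmd, hmc, hm₁, hm₂, hpn, hmn, ?_, ?_⟩
  · rw [hpJ, ← hr2]
    linarith [mul_pos hcp (sub_pos.2 (pow_lt_pow_left₀ hωp (by linarith) two_ne_zero))]
  · rw [hmJ, ← hr2]
    linarith [mul_pos hcm (sub_pos.2 (pow_lt_pow_left₀ hωm hωm₀.le two_ne_zero))]

/-- **Underdamped Nesterov's path is a saddle point of the action on long intervals.**
Let `β > 0`, `0 ≤ α < 2√β`, and let `X` be a twice continuously differentiable solution of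
`Ẍ + αẊ + βX = 0`.  If `t₂ - t₁ > 2π/√(4β - α²)`, then arbitrarily small (in `C¹` norm)
admissible perturbations can both increase and decrease the action `J_α`. -/
theorem underdamped_nesterov_saddle
    (β α : ℝ) (hβ : 0 < β) (hα0 : 0 ≤ α) (hα : α < 2 * Real.sqrt β)
    (X X' X'' : ℝ → ℝ)
    (hX : ∀ t : ℝ, HasDerivAt X (X' t) t)
    (hX' : ∀ t : ℝ, HasDerivAt X' (X'' t) t)
    (hX'' : Continuous X'')
    (hODE : ∀ t : ℝ, X'' t + α * X' t + β * X t = 0)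
    (t₁ t₂ : ℝ) (ht : t₁ < t₂)
    (hgap : t₂ - t₁ > 2 * Real.pi / Real.sqrt (4 * β - α ^ 2)) :
    ∀ δ > (0 : ℝ), ∃ hp hp' hm hm' : ℝ → ℝ,
      (∀ t ∈ Icc t₁ t₂, HasDerivWithinAt hp (hp' t) (Icc t₁ t₂) t) ∧
      ContinuousOn hp' (Icc t₁ t₂) ∧ hp t₁ = 0 ∧ hp t₂ = 0 ∧
      (∀ t ∈ Icc t₁ t₂, HasDerivWithinAt hm (hm' t) (Icc t₁ t₂) t) ∧
      ContinuousOn hm' (Icc t₁ t₂) ∧ hm t₁ = 0 ∧ hm t₂ = 0 ∧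
      (⨆ t ∈ Icc t₁ t₂, |hp t|) + (⨆ t ∈ Icc t₁ t₂, |hp' t|) < δ ∧
      (⨆ t ∈ Icc t₁ t₂, |hm t|) + (⨆ t ∈ Icc t₁ t₂, |hm' t|) < δ ∧
      constDampAction1D β α t₁ t₂ (X + hp) (X' + hp') > constDampAction1D β α t₁ t₂ X X' ∧
      constDampAction1D β α t₁ t₂ (X + hm) (X' + hm') < constDampAction1D β α t₁ t₂ X X' :=
  underdamped_nesterov_saddle_general β α hα0 hα X X' X'' hX hX' hODE t₁ t₂ hgap
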